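/- arXiv:1305.5819 — 5 statements merged into one kernel-verified Lean document; each statement's English description precedes it below -/
import Mathlib

section
/- Let λ₁, λ₂, λ₃ be real numbers with R = λ₁λ₂+λ₁λ₃+λ₂λ₃ = 0, H = λ₁+λ₂+λ₃ > 0 and K = λ₁λ₂λ₃ ≠ 0. Then 0 < (−K)/H³ ≤ 4/27; equivalently, 0 < −27·λ₁λ₂λ₃ ≤ 4·(λ₁+λ₂+λ₃)³. -/
/-- If `R = 0`, `H > 0` and `K ≠ 0`, then `0 < (−K)/H³ ≤ 4/27`. -/
theorem negK_div_Hcube_mem_Ioc (l1 l2 l3 : ℝ)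
    (hR : l1 * l2 + l1 * l3 + l2 * l3 = 0)
    (hH : 0 < l1 + l2 + l3)
    (hK : l1 * l2 * l3 ≠ 0) :
    0 < -(l1 * l2 * l3) / (l1 + l2 + l3) ^ 3 ∧
    -(l1 * l2 * l3) / (l1 + l2 + l3) ^ 3 ≤ 4 / 27 := by
  have hH3 : 0 < (l1 + l2 + l3) ^ 3 := by positivity
  have h1 : (l1 + l2 + l3) ^ 2 * (l1 * l2 + l1 * l3 + l2 * l3) = 0 := by rw [hR]; ring
  have h2 : (l1 * l2 + l1 * l3 + l2 * l3) ^ 2 = 0 := by rw [hR]; ring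
  have key : 0 ≤ 4 * (l1 + l2 + l3) ^ 4 + 27 * ((l1 + l2 + l3) * (l1 * l2 * l3)) := by
    nlinarith [sq_nonneg ((l1 - l2) * (2*l1 + 2*l2 - l3)),
      sq_nonneg ((l2 - l3) * (2*l2 + 2*l3 - l1)),
      sq_nonneg ((l3 - l1) * (2*l3 + 2*l1 - l2)), h1, h2]
  have hKle : l1 * l2 * l3 ≤ 0 := by
    nlinarith [sq_nonneg (l1*l2 - l2*l3), sq_nonneg (l2*l3 - l3*l1), sq_nonneg (l3*l1 - l1*l2), hH]
  have hKneg : l1 * l2 * l3 < 0 := lt_of_le_of_ne hKle hK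
  constructor
  · have : 0 < -(l1 * l2 * l3) := by linarith
    positivity
  · rw [div_le_div_iff₀ hH3 (by norm_num : (0:ℝ) < 27)]
    nlinarith [key, hH, mul_pos hH hH]
end

section
/- The function (λ₁, λ₂, λ₃) ↦ −λ₁λ₂λ₃ attains the maximum value 4/27 on the set {(λ₁, λ₂, λ₃) ∈ ℝ³ : λ₁λ₂ + λ₁λ₃ + λ₂λ₃ = 0 and λ₁ + λ₂ + λ₃ = 1}; that is, the supremum of −λ₁λ₂λ₃ over this set equals 4/27 and is achieved at some point of the set. -/
/-- The function `(λ₁,λ₂,λ₃) ↦ −λ₁λ₂λ₃` attains the maximum value `4/27` on the set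
`{λ₁λ₂+λ₁λ₃+λ₂λ₃ = 0, λ₁+λ₂+λ₃ = 1}`. -/
theorem isGreatest_negK_on_normalized_slice :
    IsGreatest
      { v : ℝ | ∃ l1 l2 l3 : ℝ,
          l1 * l2 + l1 * l3 + l2 * l3 = 0 ∧ l1 + l2 + l3 = 1 ∧ v = -(l1 * l2 * l3) }
      (4 / 27) := by
  constructor
  · exact ⟨-1/3, 2/3, 2/3, by norm_num, by norm_num, by norm_num⟩
  · rintro v ⟨l1, l2, l3, h1, h2, rfl⟩
    have hpos : l1 + 1/3 ≥ 0 := by nlinarith [sq_nonneg (l2 - l3)]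
    nlinarith [mul_nonneg hpos (sq_nonneg (l1 - 2/3)), sq_nonneg (l2 - l3)]
end

section
/- For every real c > 0 there exists a real c₀ > 0 such that: for all real numbers λ₁, λ₂, λ₃ with λ₁λ₂+λ₁λ₃+λ₂λ₃ = 0, H = λ₁+λ₂+λ₃ > 0 and −λ₁λ₂λ₃ ≥ c·H³, and for all i, j ∈ {1,2,3}, one has ((H − λᵢ)/(H − λⱼ))² ≤ c₀² (in particular all H − λⱼ are nonzero, so the quotients are well defined). -/
lemma quot_aux (c H a b : ℝ) (hc : 0 < c) (hH : 0 < H)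
    (ha2 : a ≤ 2 * H) (hb1 : c / 4 * H ≤ b) (ha0 : 0 ≤ a) :
    b ≠ 0 ∧ (a / b) ^ 2 ≤ (8 / c) ^ 2 := by
  have hb : 0 < b := lt_of_lt_of_le (by positivity) hb1
  refine ⟨ne_of_gt hb, ?_⟩
  have h1 : a / b ≤ 8 / c := by
    rw [div_le_div_iff₀ hb hc]
    nlinarith
  have h0 : 0 ≤ a / b := div_nonneg ha0 hb.le
  exact pow_le_pow_left₀ h0 h1 2

lemma key_aux (c H a b d : ℝ) (hc : 0 < c) (hH : 0 < H) (ha : 0 ≤ a)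
    (hb : 0 ≤ b) (hb2 : b ≤ 2 * H) (hd : 0 ≤ d) (hd2 : d ≤ 2 * H)
    (hk : c * H ^ 3 ≤ a * b * d) : c / 4 * H ≤ a := by
  have hbd : b * d ≤ 4 * H ^ 2 := by
    nlinarith [mul_nonneg (by linarith : (0:ℝ) ≤ 2*H - b) (by linarith : (0:ℝ) ≤ 2*H - d)]
  have h5 : a * (b * d) ≤ a * (4 * H ^ 2) := mul_le_mul_of_nonneg_left hbd ha
  by_contra hlt
  push_neg at hlt
  have h6 := mul_lt_mul_of_pos_right hlt (show (0:ℝ) < 4 * H ^ 2 by positivity)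
  nlinarith [h5, h6, hk]

/-- For every `c > 0` there is `c₀ > 0` such that, for all principal curvatures with
`R = 0`, `H > 0` and `−K ≥ c·H³`, the quotients `((H−λᵢ)/(H−λⱼ))²` are bounded by `c₀²`
(and in particular all `H − λⱼ` are nonzero). -/
theorem quotients_bounded_of_pinching :
    ∀ c : ℝ, 0 < c → ∃ c₀ : ℝ, 0 < c₀ ∧
      ∀ l : Fin 3 → ℝ,
        l 0 * l 1 + l 0 * l 2 + l 1 * l 2 = 0 →
        0 < l 0 + l 1 + l 2 →
        c * (l 0 + l 1 + l 2) ^ 3 ≤ -(l 0 * l 1 * l 2) →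
        ∀ i j : Fin 3,
          (l 0 + l 1 + l 2) - l j ≠ 0 ∧
          (((l 0 + l 1 + l 2) - l i) / ((l 0 + l 1 + l 2) - l j)) ^ 2 ≤ c₀ ^ 2 := by
  intro c hc
  refine ⟨8 / c, by positivity, ?_⟩
  intro l hR hH hK i j
  have hsq : (l 0 + l 1 + l 2) ^ 2 = l 0 ^ 2 + l 1 ^ 2 + l 2 ^ 2 := by
    linear_combination 2 * hR
  have ub0 : (l 0 + l 1 + l 2) - l 0 ≤ 2 * (l 0 + l 1 + l 2) := by nlinarith
  have ub1 : (l 0 + l 1 + l 2) - l 1 ≤ 2 * (l 0 + l 1 + l 2) := by nlinarith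
  have ub2 : (l 0 + l 1 + l 2) - l 2 ≤ 2 * (l 0 + l 1 + l 2) := by nlinarith
  have nn0 : 0 ≤ (l 0 + l 1 + l 2) - l 0 := by nlinarith
  have nn1 : 0 ≤ (l 0 + l 1 + l 2) - l 1 := by nlinarith
  have nn2 : 0 ≤ (l 0 + l 1 + l 2) - l 2 := by nlinarith
  have lb0 : c / 4 * (l 0 + l 1 + l 2) ≤ (l 0 + l 1 + l 2) - l 0 :=
    key_aux c _ _ _ _ hc hH nn0 nn1 ub1 nn2 ub2 (by nlinarith [hK])
  have lb1 : c / 4 * (l 0 + l 1 + l 2) ≤ (l 0 + l 1 + l 2) - l 1 :=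
    key_aux c _ _ _ _ hc hH nn1 nn0 ub0 nn2 ub2 (by nlinarith [hK])
  have lb2 : c / 4 * (l 0 + l 1 + l 2) ≤ (l 0 + l 1 + l 2) - l 2 :=
    key_aux c _ _ _ _ hc hH nn2 nn0 ub0 nn1 ub1 (by nlinarith [hK])
  fin_cases i <;> fin_cases j <;>
    first
    | exact quot_aux c _ _ _ hc hH ub0 lb0 nn0
    | exact quot_aux c _ _ _ hc hH ub0 lb1 nn0
    | exact quot_aux c _ _ _ hc hH ub0 lb2 nn0
    | exact quot_aux c _ _ _ hc hH ub1 lb0 nn1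
    | exact quot_aux c _ _ _ hc hH ub1 lb1 nn1
    | exact quot_aux c _ _ _ hc hH ub1 lb2 nn1
    | exact quot_aux c _ _ _ hc hH ub2 lb0 nn2
    | exact quot_aux c _ _ _ hc hH ub2 lb1 nn2
    | exact quot_aux c _ _ _ hc hH ub2 lb2 nn2
end

section
/- Let λ₁, λ₂, λ₃ be real numbers with H = λ₁+λ₂+λ₃ and H − λᵢ > 0 for each i ∈ {1,2,3}, and let c₀ > 0 satisfy ((H − λᵢ)/(H − λⱼ))² ≤ c₀² for all i, j ∈ {1,2,3}. Let (h_{iik})_{i,k ∈ {1,2,3}} be real numbers satisfying, for each k ∈ {1,2,3}, the linear relation h_{11k}(H−λ₁) + h_{22k}(H−λ₂) + h_{33k}(H−λ₃) = 0. Then h_{111}² + h_{222}² + h_{333}² ≤ 2c₀²·(h_{112}² + h_{113}² + h_{221}² + h_{223}² + h_{331}² + h_{332}²). -/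
/-- Solving the relation for `x` writes it as `-(y (B/A) + z (C/A))`; then `(u + v)² ≤ 2(u² + v²)`. -/
lemma sq_le_of_mul_add_mul_add_mul_eq_zero {A B C x y z c : ℝ} (hA : 0 < A)
    (hB : (B / A) ^ 2 ≤ c ^ 2) (hC : (C / A) ^ 2 ≤ c ^ 2)
    (hrel : x * A + y * B + z * C = 0) :
    x ^ 2 ≤ 2 * c ^ 2 * (y ^ 2 + z ^ 2) := by
  have hx : x = -(y * (B / A) + z * (C / A)) := by
    field_simp
    linarith
  calc x ^ 2 = (y * (B / A) + z * (C / A)) ^ 2 := by rw [hx, neg_sq]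
    _ ≤ 2 * ((y * (B / A)) ^ 2 + (z * (C / A)) ^ 2) := add_sq_le
    _ = 2 * (y ^ 2 * (B / A) ^ 2 + z ^ 2 * (C / A) ^ 2) := by ring
    _ ≤ 2 * (y ^ 2 * c ^ 2 + z ^ 2 * c ^ 2) := by gcongr
    _ = 2 * c ^ 2 * (y ^ 2 + z ^ 2) := by ring

lemma sq_le_of_sum_mul_eq_zero {w : Fin 3 → ℝ} {c : ℝ} (hw : ∀ i, 0 < w i)
    (hquot : ∀ i j, (w i / w j) ^ 2 ≤ c ^ 2) {x : Fin 3 → ℝ}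
    (hrel : ∑ i, x i * w i = 0) (k : Fin 3) :
    x k ^ 2 ≤ 2 * c ^ 2 * (∑ i, x i ^ 2 - x k ^ 2) := by
  rw [Fin.sum_univ_three] at hrel ⊢
  fin_cases k <;> simp only [Fin.zero_eta, Fin.mk_one, Fin.reduceFinMk]
  · convert sq_le_of_mul_add_mul_add_mul_eq_zero (hw 0) (hquot 1 0) (hquot 2 0) hrel using 2
    ring
  · convert sq_le_of_mul_add_mul_add_mul_eq_zero (hw 1) (hquot 0 1) (hquot 2 1)
      (by linarith : x 1 * w 1 + x 0 * w 0 + x 2 * w 2 = 0) using 2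
    ring
  · convert sq_le_of_mul_add_mul_add_mul_eq_zero (hw 2) (hquot 0 2) (hquot 1 2)
      (by linarith : x 2 * w 2 + x 0 * w 0 + x 1 * w 1 = 0) using 2
    ring

theorem diagonal_derivatives_bound_general (l : Fin 3 → ℝ) (c₀ : ℝ)
    (hpos : ∀ i : Fin 3, 0 < (l 0 + l 1 + l 2) - l i)
    (hquot : ∀ i j : Fin 3,
      (((l 0 + l 1 + l 2) - l i) / ((l 0 + l 1 + l 2) - l j)) ^ 2 ≤ c₀ ^ 2)
    (h : Fin 3 → Fin 3 → ℝ)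
    (hrel : ∀ k : Fin 3, ∑ i : Fin 3, h i k * ((l 0 + l 1 + l 2) - l i) = 0) :
    h 0 0 ^ 2 + h 1 1 ^ 2 + h 2 2 ^ 2 ≤
      2 * c₀ ^ 2 *
        (h 0 1 ^ 2 + h 0 2 ^ 2 + h 1 0 ^ 2 + h 1 2 ^ 2 + h 2 0 ^ 2 + h 2 1 ^ 2) := by
  have bound (k : Fin 3) := sq_le_of_sum_mul_eq_zero hpos hquot (hrel k) k
  simp only [Fin.sum_univ_three] at bound
  linarith [bound 0, bound 1, bound 2]

/-- If `H − λᵢ > 0` for each `i`, `((H−λᵢ)/(H−λⱼ))² ≤ c₀²` for all `i, j`, and the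
numbers `h i k` (representing `h_{iik}`) satisfy `∑ᵢ h i k (H − λᵢ) = 0` for each `k`,
then `h_{111}² + h_{222}² + h_{333}² ≤ 2c₀²(h_{112}² + h_{113}² + h_{221}² + h_{223}²
+ h_{331}² + h_{332}²)`. -/
theorem diagonal_derivatives_bound (l : Fin 3 → ℝ) (c₀ : ℝ) (hc₀ : 0 < c₀)
    (hpos : ∀ i : Fin 3, 0 < (l 0 + l 1 + l 2) - l i)
    (hquot : ∀ i j : Fin 3,
      (((l 0 + l 1 + l 2) - l i) / ((l 0 + l 1 + l 2) - l j)) ^ 2 ≤ c₀ ^ 2)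
    (h : Fin 3 → Fin 3 → ℝ)
    (hrel : ∀ k : Fin 3, ∑ i : Fin 3, h i k * ((l 0 + l 1 + l 2) - l i) = 0) :
    h 0 0 ^ 2 + h 1 1 ^ 2 + h 2 2 ^ 2 ≤
      2 * c₀ ^ 2 *
        (h 0 1 ^ 2 + h 0 2 ^ 2 + h 1 0 ^ 2 + h 1 2 ^ 2 + h 2 0 ^ 2 + h 2 1 ^ 2) :=
  diagonal_derivatives_bound_general l c₀ hpos hquot h hrel
end

section
/- For every real c > 0 there exists a real c₀ > 0 such that the following holds. Let λ₁, λ₂, λ₃ be real numbers with λ₁λ₂+λ₁λ₃+λ₂λ₃ = 0, H = λ₁+λ₂+λ₃ > 0 and −λ₁λ₂λ₃ ≥ c·H³. Let h : {1,2,3}³ → ℝ be fully symmetric (h_{ijk} is invariant under all permutations of the indices i, j, k) and satisfy, for each k ∈ {1,2,3}, the relation Σᵢ h_{iik}·(H − λᵢ) = 0. Then Σ_{i,j,k} h_{ijk}² − Σ_k (Σᵢ h_{iik})² ≥ (2/(1 + 2c₀²))·Σ_k (Σᵢ h_{iik})². (This is the pointwise content of the inequality |∇A|² − |∇H|² ≥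 (2/(1+2c₀²))|∇H|² for zero scalar curvature hypersurfaces of ℝ⁴ with (−K)/H³ ≥ c.) -/
/-!
Put `μᵢ = H - λᵢ`. Zero scalar curvature turns into `Σ μᵢ = 2H`, `Σ μᵢμⱼ = H²`, and then
`μ₁μ₂μ₃ = -λ₁λ₂λ₃ ≥ cH³` traps every `μₖ` in `[cH, 4H/3]`. By full symmetry,
`|∇A|² ≥ Σₖ (h_{kkk}² + 3 Σ_{i≠k} h_{iik}²)`, and for each `k` the vector `(h_{iik})ᵢ` is
orthogonal to `μ`. Cauchy–Schwarz with weights `(1, 3, 3)` then bounds `(Σᵢ h_{iik})²` by the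
factor `(3μₖ² - 4μₖH + 3H²) / (3(μₖ² + H²))` of the weighted sum, which leaves a gap of at
least `c/4`; the choice `c₀ = 2/√c` gives `2/(1 + 2c₀²) ≤ c/4`.
-/

lemma three_mul_sq_add_add_le (a b c x y z : ℝ) :
    3 * (a * x + b * y + c * z) ^ 2 ≤
      (3 * a ^ 2 + b ^ 2 + c ^ 2) * (x ^ 2 + 3 * y ^ 2 + 3 * z ^ 2) := by
  nlinarith [sq_nonneg (3 * a * y - b * x), sq_nonneg (3 * a * z - c * x),
    sq_nonneg (b * z - c * y)]

lemma sq_add_add_mul_le_of_esymm {t ν σ H x y z : ℝ} (hH : 0 < H) (hsum : t + ν + σ = 2 * H)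
    (hpair : t * ν + t * σ + ν * σ = H ^ 2) (hlin : t * x + ν * y + σ * z = 0) :
    3 * (t ^ 2 + H ^ 2) * (x + y + z) ^ 2 ≤
      (3 * t ^ 2 - 4 * t * H + 3 * H ^ 2) * (x ^ 2 + 3 * y ^ 2 + 3 * z ^ 2) := by
  -- by the constraint, `x + y + z` is also the pairing with `(1,1,1) - s (t,ν,σ)` for
  -- the optimal `s = (t + H)/(t² + H²)`
  have hcomb : (t ^ 2 + H ^ 2) * (x + y + z) = H * (H - t) * x
      + (t ^ 2 + H ^ 2 - (t + H) * ν) * y + (t ^ 2 + H ^ 2 - (t + H) * σ) * z := by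
    linear_combination (t + H) * hlin
  have hweights : 3 * (H * (H - t)) ^ 2 + (t ^ 2 + H ^ 2 - (t + H) * ν) ^ 2
      + (t ^ 2 + H ^ 2 - (t + H) * σ) ^ 2
        = (t ^ 2 + H ^ 2) * (3 * t ^ 2 - 4 * t * H + 3 * H ^ 2) := by
    linear_combination ((t + H) ^ 2 * (ν + σ) + t * (t + H) * (3 * H - t)) * hsum
      - 2 * (t + H) ^ 2 * hpair
  have hcs := three_mul_sq_add_add_le (H * (H - t)) (t ^ 2 + H ^ 2 - (t + H) * ν)
    (t ^ 2 + H ^ 2 - (t + H) * σ) x y z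
  rw [← hcomb, hweights] at hcs
  refine le_of_mul_le_mul_left ?_ (by positivity : 0 < t ^ 2 + H ^ 2)
  linarith

lemma mem_Icc_of_esymm {t ν σ H c : ℝ} (hc : 0 < c) (hH : 0 < H) (hsum : t + ν + σ = 2 * H)
    (hpair : t * ν + t * σ + ν * σ = H ^ 2) (hprod : c * H ^ 3 ≤ t * ν * σ) :
    t ∈ Set.Icc (c * H) (4 / 3 * H) := by
  have hνσ : ν * σ = (H - t) ^ 2 := by linear_combination hpair - t * hsum
  have hdisc : (ν - σ) ^ 2 = t * (4 * H - 3 * t) := by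
    linear_combination (ν + σ + 2 * H + 3 * t) * hsum - 4 * hpair
  rw [mul_assoc, hνσ] at hprod
  have ht : 0 < t := pos_of_mul_pos_left (hprod.trans_lt' (by positivity)) (sq_nonneg _)
  have htH : t ≤ 4 / 3 * H := by nlinarith [sq_nonneg (ν - σ)]
  have hH3 : c * H ^ 3 ≤ t * H ^ 2 :=
    hprod.trans (mul_le_mul_of_nonneg_left (by nlinarith) ht.le)
  exact ⟨le_of_mul_le_mul_right (by linarith : c * H * H ^ 2 ≤ t * H ^ 2) (by positivity), htH⟩

lemma sq_add_add_le_of_esymm {t ν σ H c x y z : ℝ} (hc : 0 < c) (hH : 0 < H)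
    (hsum : t + ν + σ = 2 * H) (hpair : t * ν + t * σ + ν * σ = H ^ 2)
    (hprod : c * H ^ 3 ≤ t * ν * σ) (hlin : t * x + ν * y + σ * z = 0) :
    c / 4 * (x + y + z) ^ 2 ≤ x ^ 2 + 3 * y ^ 2 + 3 * z ^ 2 - (x + y + z) ^ 2 := by
  obtain ⟨hct, ht⟩ := mem_Icc_of_esymm hc hH hsum hpair hprod
  have hcs := sq_add_add_mul_le_of_esymm hH hsum hpair hlin
  set S := (x + y + z) ^ 2
  set Q := x ^ 2 + 3 * y ^ 2 + 3 * z ^ 2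
  have ht0 : 0 ≤ t := (mul_pos hc hH).le.trans hct
  have hgap : 4 * t * H * Q ≤ 3 * (t ^ 2 + H ^ 2) * (Q - S) := by linarith
  have hQS : 0 ≤ Q - S :=
    nonneg_of_mul_nonneg_right (hgap.trans' (by positivity)) (by positivity)
  have hcS : H ^ 2 * (c * S) ≤ H ^ 2 * (4 * (Q - S)) := calc
    H ^ 2 * (c * S) = c * H * H * S := by ring
    _ ≤ t * H * S := by gcongr
    _ ≤ t * H * Q := by gcongr; linarith
    _ ≤ 3 / 4 * (t ^ 2 + H ^ 2) * (Q - S) := by linarith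
    _ ≤ 3 / 4 * (25 / 9 * H ^ 2) * (Q - S) := by gcongr; nlinarith
    _ ≤ H ^ 2 * (4 * (Q - S)) := by nlinarith
  linarith [le_of_mul_le_mul_left hcS (by positivity)]

lemma sq_add_add_le_of_scalarCurvature_eq_zero {c l₀ l₁ l₂ x y z : ℝ} (hc : 0 < c)
    (hR : l₀ * l₁ + l₀ * l₂ + l₁ * l₂ = 0) (hH : 0 < l₀ + l₁ + l₂)
    (hK : c * (l₀ + l₁ + l₂) ^ 3 ≤ -(l₀ * l₁ * l₂))
    (hlin : x * (l₀ + l₁ + l₂ - l₀) + y * (l₀ + l₁ + l₂ - l₁) + z * (l₀ + l₁ + l₂ - l₂) = 0) :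
    c / 4 * (x + y + z) ^ 2 ≤ x ^ 2 + 3 * y ^ 2 + 3 * z ^ 2 - (x + y + z) ^ 2 :=
  sq_add_add_le_of_esymm (t := l₀ + l₁ + l₂ - l₀) (ν := l₀ + l₁ + l₂ - l₁)
    (σ := l₀ + l₁ + l₂ - l₂) hc hH (by ring) (by linear_combination hR)
    (hK.trans_eq (by linear_combination (-(l₀ + l₁ + l₂)) * hR)) (by linear_combination hlin)

lemma sum_sq_of_symmetric {h : Fin 3 → Fin 3 → Fin 3 → ℝ}
    (hsym : ∀ i j k, h i j k = h j i k ∧ h i j k = h i k j) :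
    ∑ i, ∑ j, ∑ k, h i j k ^ 2 =
      (h 0 0 0 ^ 2 + 3 * h 1 1 0 ^ 2 + 3 * h 2 2 0 ^ 2)
        + (h 1 1 1 ^ 2 + 3 * h 0 0 1 ^ 2 + 3 * h 2 2 1 ^ 2)
        + (h 2 2 2 ^ 2 + 3 * h 0 0 2 ^ 2 + 3 * h 1 1 2 ^ 2) + 6 * h 0 1 2 ^ 2 := by
  simp only [Fin.sum_univ_three]
  grind

/-- Pointwise content of `|∇A|² − |∇H|² ≥ (2/(1+2c₀²))·|∇H|²` for zero scalar
curvature hypersurfaces of `ℝ⁴` with `(−K)/H³ ≥ c`. -/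
theorem nabla_A_minus_nabla_H_bound :
    ∀ c : ℝ, 0 < c → ∃ c₀ : ℝ, 0 < c₀ ∧
      ∀ l : Fin 3 → ℝ,
        l 0 * l 1 + l 0 * l 2 + l 1 * l 2 = 0 →
        0 < l 0 + l 1 + l 2 →
        c * (l 0 + l 1 + l 2) ^ 3 ≤ -(l 0 * l 1 * l 2) →
        ∀ h : Fin 3 → Fin 3 → Fin 3 → ℝ,
          (∀ i j k : Fin 3, h i j k = h j i k ∧ h i j k = h i k j) →
          (∀ k : Fin 3, ∑ i : Fin 3, h i i k * ((l 0 + l 1 + l 2) - l i) = 0) →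
          (2 / (1 + 2 * c₀ ^ 2)) * ∑ k : Fin 3, (∑ i : Fin 3, h i i k) ^ 2 ≤
            (∑ i : Fin 3, ∑ j : Fin 3, ∑ k : Fin 3, h i j k ^ 2) -
              ∑ k : Fin 3, (∑ i : Fin 3, h i i k) ^ 2 := by
  intro c hc
  refine ⟨2 / √c, by positivity, fun l hR hH hK h hsym hrel => ?_⟩
  have hcoef : 2 / (1 + 2 * (2 / √c) ^ 2) ≤ c / 4 := by
    rw [div_pow, Real.sq_sqrt hc.le, div_le_iff₀ (by positivity)]
    field_simp
    linarith
  have hscaled := mul_le_mul_of_nonneg_right hcoef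
    (by positivity : 0 ≤ ∑ k : Fin 3, (∑ i : Fin 3, h i i k) ^ 2)
  rw [sum_sq_of_symmetric hsym]
  simp only [Fin.sum_univ_three] at hrel hscaled ⊢
  have g₀ := sq_add_add_le_of_scalarCurvature_eq_zero
    (x := h 0 0 0) (y := h 1 1 0) (z := h 2 2 0) hc hR hH hK (by linear_combination hrel 0)
  have g₁ := sq_add_add_le_of_scalarCurvature_eq_zero (l₀ := l 1) (l₁ := l 0) (l₂ := l 2)
    (x := h 1 1 1) (y := h 0 0 1) (z := h 2 2 1) hc
    (by linear_combination hR) (by linarith) (by linarith) (by linear_combination hrel 1)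
  have g₂ := sq_add_add_le_of_scalarCurvature_eq_zero (l₀ := l 2) (l₁ := l 0) (l₂ := l 1)
    (x := h 2 2 2) (y := h 0 0 2) (z := h 1 1 2) hc
    (by linear_combination hR) (by linarith) (by linarith) (by linear_combination hrel 2)
  linarith [sq_nonneg (h 0 1 2)]
end
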